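/- Let a = −1 and let f : ℝ → ℝ be differentiable. Then the characteristic polynomial of the Jacobian matrix of V_{−1,f} at the point (0,0,1) equals (X − 4)·((X + 2)² + f(0)²); hence its complex eigenvalues are 4 and −2 ± i·f(0) (a nondegenerate focus when f(0) ≠ 0), and the sum of the eigenvalues (the trace) is 0, consistent with V_{−1,f} being divergence-free. -/

import Mathlib

/-!
On the `z`-axis `x = y = 0` and `H_a = 0`, so by the product rule the terms `f(H_a)·y` and
`f(H_a)·x` of `V_{a,f}` contribute just `f(0)·dy` and `f(0)·dx` to the Jacobian: the derivative
of `f ∘ H_a` is multiplied by `y = 0` resp. `x = 0`. The Jacobian at `(0,0,z)` is therefore the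
rotation-scaling block `[[-2z, -f(0)], [f(0), -2z]]` next to `4z`, whose characteristic
polynomial and complex eigenvalues can be read off.
-/

open Polynomial

/-- `H_a(x,y,z) = (x² + y²)(x² + y² + z² + a)`. -/
noncomputable def Ha3 (a : ℝ) : ℝ × ℝ × ℝ → ℝ :=
  fun p => (p.1 ^ 2 + p.2.1 ^ 2) * (p.1 ^ 2 + p.2.1 ^ 2 + p.2.2 ^ 2 + a)

/-- The vortex-plug vector field
`V_{a,f}(x,y,z) = (−2xz − f(H_a)·y, −2yz + f(H_a)·x, 2(2(x²+y²)+z²+a))`. -/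
noncomputable def Vaf (a : ℝ) (f : ℝ → ℝ) : ℝ × ℝ × ℝ → ℝ × ℝ × ℝ :=
  fun p =>
    (-2 * p.1 * p.2.2 - f (Ha3 a p) * p.2.1,
      -2 * p.2.1 * p.2.2 + f (Ha3 a p) * p.1,
      2 * (2 * (p.1 ^ 2 + p.2.1 ^ 2) + p.2.2 ^ 2 + a))

theorem Ha3_zero_zero (a z : ℝ) : Ha3 a (0, 0, z) = 0 := by
  simp [Ha3]

theorem fderiv_Vaf_zero_zero_apply (a : ℝ) {f : ℝ → ℝ} (hf : DifferentiableAt ℝ f 0)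
    (z : ℝ) (q : ℝ × ℝ × ℝ) :
    fderiv ℝ (Vaf a f) (0, 0, z) q =
      (-2 * z * q.1 - f 0 * q.2.1, f 0 * q.1 - 2 * z * q.2.1, 4 * z * q.2.2) := by
  have hx : HasFDerivAt (𝕜 := ℝ) (fun p : ℝ × ℝ × ℝ => p.1) _ (0, 0, z) := hasFDerivAt_fst
  have hy : HasFDerivAt (𝕜 := ℝ) (fun p : ℝ × ℝ × ℝ => p.2.1) _ (0, 0, z) := hasFDerivAt_snd.fst
  have hz : HasFDerivAt (𝕜 := ℝ) (fun p : ℝ × ℝ × ℝ => p.2.2) _ (0, 0, z) := hasFDerivAt_snd.snd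
  have hH : DifferentiableAt ℝ (Ha3 a) (0, 0, z) := by
    unfold Ha3
    fun_prop
  rw [← Ha3_zero_zero a z] at hf
  have hfH := (hf.comp (0, 0, z) hH).hasFDerivAt
  have hV : HasFDerivAt (Vaf a f) _ (0, 0, z) :=
    (((hx.const_mul (-2)).mul hz).sub (hfH.mul hy)).prodMk
      ((((hy.const_mul (-2)).mul hz).add (hfH.mul hx)).prodMk
        ((((((hx.pow 2).add (hy.pow 2)).const_mul 2).add (hz.pow 2)).add_const a).const_mul 2))
  rw [hV.fderiv]
  refine Prod.ext ?_ (Prod.ext ?_ ?_) <;> simp [Ha3_zero_zero] <;> ring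

theorem charpoly_rotationScaling_blockDiag (a b d : ℝ) :
    Matrix.charpoly !![a, -b, 0; b, a, 0; 0, 0, d] = (X - C d) * ((X - C a) ^ 2 + C b ^ 2) := by
  simp [Matrix.charpoly, Matrix.det_fin_three]
  ring

theorem isRoot_map_complex_charpoly_rotationScaling_blockDiag (a b d : ℝ) :
    let p := (Matrix.charpoly !![a, -b, 0; b, a, 0; 0, 0, d]).map (algebraMap ℝ ℂ)
    p.IsRoot d ∧ p.IsRoot (a + Complex.I * b) ∧ p.IsRoot (a - Complex.I * b) := by
  refine ⟨?_, ?_, ?_⟩ <;> simp [charpoly_rotationScaling_blockDiag, mul_pow]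

/-- For `a = −1` and differentiable `f`, the Jacobian of `V_{−1,f}` at `(0,0,1)` is the
matrix `[[−2, −f(0), 0], [f(0), −2, 0], [0, 0, 4]]`, whose characteristic polynomial is
`(X − 4)((X + 2)² + f(0)²)`; its complex eigenvalues are `4` and `−2 ± i f(0)`, and their
sum (the trace) is `0`, consistent with `V_{−1,f}` being divergence-free. -/
theorem stmt12 (f : ℝ → ℝ) (hf : Differentiable ℝ f) :
    (∀ q : ℝ × ℝ × ℝ,
      fderiv ℝ (Vaf (-1) f) ((0 : ℝ), (0 : ℝ), (1 : ℝ)) q =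
        (-2 * q.1 - f 0 * q.2.1, f 0 * q.1 - 2 * q.2.1, 4 * q.2.2)) ∧
    Matrix.charpoly !![(-2 : ℝ), -f 0, 0; f 0, -2, 0; 0, 0, 4] =
      (X - C 4) * ((X + C 2) ^ 2 + C (f 0) ^ 2) ∧
    Polynomial.IsRoot
      ((Matrix.charpoly !![(-2 : ℝ), -f 0, 0; f 0, -2, 0; 0, 0, 4]).map
        (algebraMap ℝ ℂ)) 4 ∧
    Polynomial.IsRoot
      ((Matrix.charpoly !![(-2 : ℝ), -f 0, 0; f 0, -2, 0; 0, 0, 4]).map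
        (algebraMap ℝ ℂ)) (-2 + Complex.I * (f 0 : ℂ)) ∧
    Polynomial.IsRoot
      ((Matrix.charpoly !![(-2 : ℝ), -f 0, 0; f 0, -2, 0; 0, 0, 4]).map
        (algebraMap ℝ ℂ)) (-2 - Complex.I * (f 0 : ℂ)) ∧
    (4 : ℂ) + (-2 + Complex.I * (f 0 : ℂ)) + (-2 - Complex.I * (f 0 : ℂ)) = 0 ∧
    Matrix.trace !![(-2 : ℝ), -f 0, 0; f 0, -2, 0; 0, 0, 4] = 0 := by
  obtain ⟨h4, hplus, hminus⟩ :=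
    isRoot_map_complex_charpoly_rotationScaling_blockDiag (-2) (f 0) 4
  push_cast at h4 hplus hminus
  refine ⟨fun q => ?_, ?_, h4, hplus, hminus, by ring, ?_⟩
  · simpa using fderiv_Vaf_zero_zero_apply (-1) (hf 0) 1 q
  · simpa using charpoly_rotationScaling_blockDiag (-2) (f 0) 4
  · simp [Matrix.trace_fin_three]
    norm_num
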